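/- Let X and Y be nonempty finite sets and let W be a classical channel from X to Y, i.e., W(y|x) ≥ 0 and ∑_{y∈Y} W(y|x) = 1 for every x ∈ X. For each x ∈ X define the unit vector φ_x ∈ ℝ^Y by φ_x(y) = √(W(y|x)). Then the minimum over all probability distributions Q on Y of max_{x∈X} (−2 log ∑_{y∈Y} √(W(y|x)·Q(y))) equals the minimum over all unit-norm vectors c ∈ ℝ^Y of max_{x∈X} (−log ⟨φ_x, c⟩²), the equality holding in the extended nonnegative reals [0,∞], with both minima attained. -/

import Mathlib

/-!
A handle `c` of unit norm yields the distribution `c²`, and a distribution `Q` the handle `√Q`.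
Since `⟨φ_x, √Q⟩ = ∑_y √(W(y|x) Q(y))` while `|⟨φ_x, c⟩| ≤ ∑_y √(W(y|x) c(y)²)`, the value of
`√Q` equals the cut-off objective at `Q`, and the value of `c` dominates the objective at `c²`.
Hence the handle `√Q` built from a minimiser `Q` of the cut-off objective is a minimising handle.
Such a `Q` exists because the objective is lower semicontinuous (`negLog` is continuous into
`[0, ∞]`) and the simplex is compact.
-/

open scoped ENNReal

/-- `-log r` as an extended nonnegative real, `+∞` when `r ≤ 0`. -/
noncomputable def negLog (r : ℝ) : ℝ≥0∞ :=
  if r ≤ 0 then ⊤ else ENNReal.ofReal (-Real.log r)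

lemma negLog_eq_toENNReal_neg_log (r : ℝ) :
    negLog r = (-ENNReal.log (ENNReal.ofReal r)).toENNReal := by
  rw [negLog, ENNReal.log_ofReal]
  split_ifs <;> rfl

lemma continuous_negLog : Continuous negLog := by
  simp_rw [funext negLog_eq_toENNReal_neg_log]
  exact EReal.continuous_toENNReal.comp
    (continuous_neg.comp (ENNReal.continuous_log.comp ENNReal.continuous_ofReal))

lemma antitone_negLog : Antitone negLog := by
  intro r s hrs
  unfold negLog
  by_cases hr : r ≤ 0
  · simp [hr]
  · have hs : ¬ s ≤ 0 := fun hs => hr (hrs.trans hs)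
    simp only [hr, hs, if_false]
    exact ENNReal.ofReal_le_ofReal (neg_le_neg (Real.log_le_log (not_le.1 hr) hrs))

lemma negLog_sq {t : ℝ} (ht : 0 ≤ t) : negLog (t ^ 2) = 2 * negLog t := by
  rcases ht.eq_or_lt with rfl | ht
  · simp [negLog]
  · simp only [negLog, not_le.2 ht, not_le.2 (pow_pos ht 2), if_false, Real.log_pow]
    rw [show -((2 : ℕ) * Real.log t) = 2 * -Real.log t by push_cast; ring,
      ENNReal.ofReal_mul zero_le_two, ENNReal.ofReal_ofNat]

lemma abs_sum_sqrt_mul_le {Y : Type*} [Fintype Y] (w c : Y → ℝ) :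
    |∑ y, Real.sqrt (w y) * c y| ≤ ∑ y, Real.sqrt (w y * c y ^ 2) := by
  calc |∑ y, Real.sqrt (w y) * c y| ≤ ∑ y, |Real.sqrt (w y) * c y| :=
        Finset.abs_sum_le_sum_abs _ _
    _ = ∑ y, Real.sqrt (w y * c y ^ 2) := by
        refine Finset.sum_congr rfl fun y _ => ?_
        rw [Real.sqrt_mul' _ (sq_nonneg _), Real.sqrt_sq_eq_abs, abs_mul,
          abs_of_nonneg (Real.sqrt_nonneg _)]

section Objectives

variable {X Y : Type*} [Fintype Y]

/-- `max_x D_{1/2}(W(·|x) ‖ Q)`, whose minimum over distributions `Q` is the cut-off rate. -/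
noncomputable def cutoffObjective (W : X → Y → ℝ) (Q : Y → ℝ) : ℝ≥0∞ :=
  ⨆ x, 2 * negLog (∑ y, Real.sqrt (W x y * Q y))

noncomputable def lovaszValue (W : X → Y → ℝ) (c : Y → ℝ) : ℝ≥0∞ :=
  ⨆ x, negLog ((∑ y, Real.sqrt (W x y) * c y) ^ 2)

lemma lowerSemicontinuous_cutoffObjective (W : X → Y → ℝ) :
    LowerSemicontinuous (cutoffObjective W) :=
  lowerSemicontinuous_iSup fun x =>
    ((ENNReal.continuous_const_mul (by norm_num)).comp
      (continuous_negLog.comp (by fun_prop))).lowerSemicontinuous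

lemma exists_isMinOn_cutoffObjective [Nonempty Y] (W : X → Y → ℝ) :
    ∃ Q ∈ stdSimplex ℝ Y, IsMinOn (cutoffObjective W) (stdSimplex ℝ Y) Q :=
  LowerSemicontinuousOn.exists_isMinOn .of_subtype
    (isCompact_stdSimplex ℝ Y) ((lowerSemicontinuous_cutoffObjective W).lowerSemicontinuousOn _)

lemma lovaszValue_sqrt (W : X → Y → ℝ) {Q : Y → ℝ} (hQ : ∀ y, 0 ≤ Q y) :
    lovaszValue W (fun y => Real.sqrt (Q y)) = cutoffObjective W Q := by
  refine iSup_congr fun x => ?_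
  simp_rw [← Real.sqrt_mul' _ (hQ _)]
  exact negLog_sq (Finset.sum_nonneg fun y _ => Real.sqrt_nonneg _)

lemma cutoffObjective_sq_le_lovaszValue (W : X → Y → ℝ) (c : Y → ℝ) :
    cutoffObjective W (fun y => c y ^ 2) ≤ lovaszValue W c := by
  refine iSup_mono fun x => ?_
  rw [← negLog_sq (Finset.sum_nonneg fun y _ => Real.sqrt_nonneg _)]
  refine antitone_negLog ?_
  rw [← sq_abs]
  exact pow_le_pow_left₀ (abs_nonneg _) (abs_sum_sqrt_mul_le (W x) c) 2

end Objectives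

theorem stmt11_general {X Y : Type*} [Fintype Y] [Nonempty Y]
    (W : X → Y → ℝ) :
    ∃ (Q : Y → ℝ) (c : Y → ℝ),
      (∀ y, 0 ≤ Q y) ∧ (∑ y, Q y = 1) ∧ (∑ y, c y ^ 2 = 1) ∧
      (∀ Q' : Y → ℝ, (∀ y, 0 ≤ Q' y) → (∑ y, Q' y = 1) →
        (⨆ x, 2 * negLog (∑ y, Real.sqrt (W x y * Q y))) ≤
          ⨆ x, 2 * negLog (∑ y, Real.sqrt (W x y * Q' y))) ∧
      (∀ c' : Y → ℝ, (∑ y, c' y ^ 2 = 1) →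
        (⨆ x, negLog ((∑ y, Real.sqrt (W x y) * c y) ^ 2)) ≤
          ⨆ x, negLog ((∑ y, Real.sqrt (W x y) * c' y) ^ 2)) ∧
      (⨆ x, 2 * negLog (∑ y, Real.sqrt (W x y * Q y))) =
        ⨆ x, negLog ((∑ y, Real.sqrt (W x y) * c y) ^ 2) := by
  obtain ⟨Q, ⟨hQ0, hQ1⟩, hQmin⟩ := exists_isMinOn_cutoffObjective W
  refine ⟨Q, fun y => Real.sqrt (Q y), hQ0, hQ1, ?_, fun Q' hQ'0 hQ'1 => hQmin ⟨hQ'0, hQ'1⟩,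
    fun c' hc' => ?_, (lovaszValue_sqrt W hQ0).symm⟩
  · simpa only [Real.sq_sqrt (hQ0 _)] using hQ1
  · calc lovaszValue W (fun y => Real.sqrt (Q y)) = cutoffObjective W Q := lovaszValue_sqrt W hQ0
      _ ≤ cutoffObjective W (fun y => c' y ^ 2) := hQmin ⟨fun y => sq_nonneg _, hc'⟩
      _ ≤ lovaszValue W c' := cutoffObjective_sq_le_lovaszValue W c'

/-- The cut-off rate of a classical channel `W` equals the Lovász-type value of
the square-root representation `φ_x(y) = √W(y|x)`:
`min_Q max_x -2 log ∑_y √(W(y|x) Q(y)) = min_{‖c‖=1} max_x -log ⟨φ_x, c⟩²`,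
both minima attained, the equality holding in `[0,∞]`. -/
theorem stmt11 {X Y : Type*} [Fintype X] [Nonempty X] [Fintype Y] [Nonempty Y]
    (W : X → Y → ℝ) (hW : ∀ x y, 0 ≤ W x y) (hW1 : ∀ x, ∑ y, W x y = 1) :
    ∃ (Q : Y → ℝ) (c : Y → ℝ),
      (∀ y, 0 ≤ Q y) ∧ (∑ y, Q y = 1) ∧ (∑ y, c y ^ 2 = 1) ∧
      (∀ Q' : Y → ℝ, (∀ y, 0 ≤ Q' y) → (∑ y, Q' y = 1) →
        (⨆ x, 2 * negLog (∑ y, Real.sqrt (W x y * Q y))) ≤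
          ⨆ x, 2 * negLog (∑ y, Real.sqrt (W x y * Q' y))) ∧
      (∀ c' : Y → ℝ, (∑ y, c' y ^ 2 = 1) →
        (⨆ x, negLog ((∑ y, Real.sqrt (W x y) * c y) ^ 2)) ≤
          ⨆ x, negLog ((∑ y, Real.sqrt (W x y) * c' y) ^ 2)) ∧
      (⨆ x, 2 * negLog (∑ y, Real.sqrt (W x y * Q y))) =
        ⨆ x, negLog ((∑ y, Real.sqrt (W x y) * c y) ^ 2) :=
  stmt11_general W
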